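/- arXiv:2508.21416 — 3 statements merged into one kernel-verified Lean document; each statement's English description precedes it below -/
import Mathlib

section
/- For a vector x in R^(2n) where the first n coordinates ('red tanks') equal 1 and the last n coordinates ('blue tanks') equal 0, applying the moving window strategy with window width k results in each of the first n−k+1 red tanks containing at most 1/(k+1) units of water. More precisely: if one equilibrates (replaces both coordinates by their average) red tank i with blue tanks i, i+1, ..., i+k−1 in order, for i = 1, ..., n−k+1, then after equilibrating red tank i with blue tank j, both coordinates are at most (k+i−j)/(k+1). -/
/-- Equilibrate tanks `i` and `j`: both get the average of their contents. -/
noncomputable def equil {α : Type*} [DecidableEq α] (i j : α) (v : α → ℝ) : α → ℝ :=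
  fun a => if a = i ∨ a = j then (v i + v j) / 2 else v a

/-- Apply a finite sequence of pairwise equilibrations. -/
noncomputable def applySteps {α : Type*} [DecidableEq α] (v : α → ℝ) (L : List (α × α)) : α → ℝ :=
  L.foldl (fun w p => equil p.1 p.2 w) v

/-- The (0-based) list of steps `(red i', blue j')` of the moving window strategy with window
width `k`, up to and including the step equilibrating red tank `i` with blue tank `j`:
all full inner loops for `i' < i`, followed by the steps `(i, i), ..., (i, j)`. -/
def windowPrefix (k i j : ℕ) : List (ℕ × ℕ) :=
  ((List.range i).flatMap fun i' => (List.range k).map fun d => (i', i' + d)) ++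
    ((List.range (j + 1 - i)).map fun d => (i, i + d))

def toFin (n : ℕ) (hn : 0 < n) (i : ℕ) : Fin n := ⟨i % n, Nat.mod_lt _ hn⟩

namespace MovingWindow

lemma applySteps_append {α : Type*} [DecidableEq α] (v : α → ℝ) (L1 L2 : List (α × α)) :
    applySteps v (L1 ++ L2) = applySteps (applySteps v L1) L2 := by
  simp [applySteps, List.foldl_append]

lemma equil_fst {α : Type*} [DecidableEq α] (i j : α) (v : α → ℝ) :
    equil i j v i = (v i + v j) / 2 := by simp [equil]

lemma equil_snd {α : Type*} [DecidableEq α] (i j : α) (v : α → ℝ) :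
    equil i j v j = (v i + v j) / 2 := by simp [equil]

lemma equil_other {α : Type*} [DecidableEq α] {i j x : α} (v : α → ℝ)
    (h1 : x ≠ i) (h2 : x ≠ j) : equil i j v x = v x := by
  simp [equil, h1, h2]

lemma equil_lr_inl {α β : Type*} [DecidableEq α] [DecidableEq β] (a : α) (b : β)
    (w : α ⊕ β → ℝ) (c : α) (h : c ≠ a) :
    equil (Sum.inl a) (Sum.inr b) w (Sum.inl c) = w (Sum.inl c) := by
  apply equil_other <;> simp [h]

lemma equil_lr_inr {α β : Type*} [DecidableEq α] [DecidableEq β] (a : α) (b : β)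
    (w : α ⊕ β → ℝ) (c : β) (h : c ≠ b) :
    equil (Sum.inl a) (Sum.inr b) w (Sum.inr c) = w (Sum.inr c) := by
  apply equil_other <;> simp [h]

lemma toFin_inj {n : ℕ} (hn : 0 < n) {a b : ℕ} (ha : a < n) (hb : b < n)
    (h : toFin n hn a = toFin n hn b) : a = b := by
  simpa [toFin, Nat.mod_eq_of_lt ha, Nat.mod_eq_of_lt hb] using congrArg Fin.val h

lemma toFin_ne {n : ℕ} (hn : 0 < n) {a b : ℕ} (ha : a < n) (hb : b < n) (h : a ≠ b) :
    toFin n hn a ≠ toFin n hn b := fun he => h (toFin_inj hn ha hb he)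

lemma windowPrefix_succ (k i j : ℕ) (h : i ≤ j + 1) :
    windowPrefix k i (j + 1) = windowPrefix k i j ++ [(i, j + 1)] := by
  unfold windowPrefix
  have h1 : j + 1 + 1 - i = (j + 1 - i) + 1 := by omega
  have h2 : i + (j + 1 - i) = j + 1 := by omega
  rw [h1, List.range_succ, List.map_append, List.map_singleton, h2, ← List.append_assoc]

lemma windowPrefix_next (k i : ℕ) (hk : 1 ≤ k) :
    windowPrefix k (i + 1) (i + 1) = windowPrefix k i (i + k - 1) ++ [(i + 1, i + 1)] := by
  unfold windowPrefix
  have h1 : i + 1 + 1 - (i + 1) = 1 := by omega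
  have h2 : i + k - 1 + 1 - i = k := by omega
  rw [h1, h2, List.range_succ, List.flatMap_append]
  simp [List.append_assoc, List.range_succ]

lemma windowPrefix_zero (k : ℕ) : windowPrefix k 0 0 = [(0, 0)] := by
  simp [windowPrefix, List.range_succ]

/-- The state after the steps of `windowPrefix k i j`. -/
noncomputable def st (n k : ℕ) (hn : 0 < n) (v : Fin n ⊕ Fin n → ℝ) (i j : ℕ) :
    Fin n ⊕ Fin n → ℝ :=
  applySteps v ((windowPrefix k i j).map
    (fun p => (Sum.inl (toFin n hn p.1), Sum.inr (toFin n hn p.2))))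

/-- The strengthened invariant. -/
def Q (n k : ℕ) (hn : 0 < n) (v : Fin n ⊕ Fin n → ℝ) (i j : ℕ) : Prop :=
  st n k hn v i j (Sum.inl (toFin n hn i)) ≤ ((k : ℝ) + i - j) / (k + 1) ∧
  (∀ j', i ≤ j' → j' ≤ j →
    st n k hn v i j (Sum.inr (toFin n hn j')) ≤ ((k : ℝ) + i - j') / (k + 1)) ∧
  (∀ j', j < j' → j' < i + k →
    st n k hn v i j (Sum.inr (toFin n hn j')) ≤ ((k : ℝ) + i - 1 - j') / (k + 1)) ∧
  (∀ i', i < i' → i' < n → st n k hn v i j (Sum.inl (toFin n hn i')) = 1) ∧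
  (∀ j', i + k ≤ j' → j' < n → st n k hn v i j (Sum.inr (toFin n hn j')) = 0) ∧
  (∀ i', i' < i → st n k hn v i j (Sum.inl (toFin n hn i')) ≤ 1 / ((k : ℝ) + 1))

lemma st_succ {n k : ℕ} (hn : 0 < n) (v : Fin n ⊕ Fin n → ℝ) (i j : ℕ) (h : i ≤ j + 1) :
    st n k hn v i (j + 1) =
      equil (Sum.inl (toFin n hn i)) (Sum.inr (toFin n hn (j + 1))) (st n k hn v i j) := by
  unfold st
  rw [windowPrefix_succ k i j h, List.map_append, applySteps_append]
  rfl

lemma st_next {n k : ℕ} (hn : 0 < n) (v : Fin n ⊕ Fin n → ℝ) (i : ℕ) (hk : 1 ≤ k) :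
    st n k hn v (i + 1) (i + 1) =
      equil (Sum.inl (toFin n hn (i + 1))) (Sum.inr (toFin n hn (i + 1)))
        (st n k hn v i (i + k - 1)) := by
  unfold st
  rw [windowPrefix_next k i hk, List.map_append, applySteps_append]
  rfl

lemma avg_le {a b X c : ℝ} (hc : 0 < c + 1) (ha : a ≤ (X + 1) / (c + 1))
    (hb : b ≤ (X - 1) / (c + 1)) : (a + b) / 2 ≤ X / (c + 1) := by
  have h : (X + 1) / (c + 1) + (X - 1) / (c + 1) = 2 * (X / (c + 1)) := by
    field_simp
    ring
  linarith

end MovingWindow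

/-- The moving window invariant: after equilibrating red tank `i` with blue tank `j`
(0-based indices), both contain at most `(k + i - j)/(k + 1)`; consequently, after both loops
every red tank `i` with `i + k ≤ n` contains at most `1/(k+1)`. -/
theorem moving_window_invariant (n k : ℕ) (hn : 0 < n) (hk : 1 ≤ k) (hkn : k ≤ n)
    (v : Fin n ⊕ Fin n → ℝ)
    (hred : ∀ i, v (Sum.inl i) = 1) (hblue : ∀ j, v (Sum.inr j) = 0) :
    (∀ i j : ℕ, i + k ≤ n → i ≤ j → j < i + k →
      (applySteps v ((windowPrefix k i j).map
          (fun p => (Sum.inl (toFin n hn p.1), Sum.inr (toFin n hn p.2))))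
          (Sum.inl (toFin n hn i)) ≤ ((k : ℝ) + i - j) / (k + 1)) ∧
      (applySteps v ((windowPrefix k i j).map
          (fun p => (Sum.inl (toFin n hn p.1), Sum.inr (toFin n hn p.2))))
          (Sum.inr (toFin n hn j)) ≤ ((k : ℝ) + i - j) / (k + 1))) ∧
    (∀ i : ℕ, i + k ≤ n →
      applySteps v ((windowPrefix k (n - k) (n - 1)).map
          (fun p => (Sum.inl (toFin n hn p.1), Sum.inr (toFin n hn p.2))))
          (Sum.inl (toFin n hn i)) ≤ 1 / ((k : ℝ) + 1)) := by
  classical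
  open MovingWindow in
  have hk1 : (1 : ℝ) ≤ (k : ℝ) := by exact_mod_cast hk
  have hkpos : (0 : ℝ) < (k : ℝ) + 1 := by linarith
  -- Base case: Q 0 0
  have base : Q n k hn v 0 0 := by
    have hst : st n k hn v 0 0 = equil (Sum.inl (toFin n hn 0)) (Sum.inr (toFin n hn 0)) v := by
      unfold st
      rw [windowPrefix_zero]
      rfl
    have hval : (v (Sum.inl (toFin n hn 0)) + v (Sum.inr (toFin n hn 0))) / 2 = 1 / 2 := by
      rw [hred, hblue]; norm_num
    have hhalf : (1 : ℝ) / 2 ≤ ((k : ℝ) + 0 - 0) / (k + 1) := by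
      rw [div_le_div_iff₀ (by norm_num) hkpos]
      push_cast
      linarith
    refine ⟨?_, ?_, ?_, ?_, ?_, ?_⟩
    · rw [hst, equil_fst, hval]; simpa using hhalf
    · intro j' h1 h2
      have : j' = 0 := by omega
      subst this
      rw [hst, equil_snd, hval]; simpa using hhalf
    · intro j' h1 h2
      rw [hst, equil_lr_inr _ _ _ _ (toFin_ne hn (by omega) (by omega) (by omega)), hblue]
      apply div_nonneg _ (le_of_lt hkpos)
      have h2' : j' + 1 ≤ k := by omega
      have : (j' : ℝ) + 1 ≤ (k : ℝ) := by exact_mod_cast h2'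
      push_cast
      linarith
    · intro i' h1 h2
      rw [hst, equil_lr_inl _ _ _ _ (toFin_ne hn h2 hn (by omega)), hred]
    · intro j' h1 h2
      rw [hst, equil_lr_inr _ _ _ _ (toFin_ne hn h2 hn (by omega)), hblue]
    · intro i' h1; omega
  -- Transition within a loop
  have step1 : ∀ i j : ℕ, i + k ≤ n → i ≤ j → j + 1 < i + k →
      Q n k hn v i j → Q n k hn v i (j + 1) := by
    intro i j hikn hij hjk ⟨h1, h2, h3, h4, h5, h6⟩
    have hiN : i < n := by omega
    have hj1N : j + 1 < n := by omega
    have hst := st_succ (k := k) hn v i j (by omega)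
    have hval : st n k hn v i (j + 1) (Sum.inl (toFin n hn i))
        = (st n k hn v i j (Sum.inl (toFin n hn i))
            + st n k hn v i j (Sum.inr (toFin n hn (j + 1)))) / 2 := by
      rw [hst, equil_fst]
    have hval' : st n k hn v i (j + 1) (Sum.inr (toFin n hn (j + 1)))
        = (st n k hn v i j (Sum.inl (toFin n hn i))
            + st n k hn v i j (Sum.inr (toFin n hn (j + 1)))) / 2 := by
      rw [hst, equil_snd]
    have hbound : (st n k hn v i j (Sum.inl (toFin n hn i))
            + st n k hn v i j (Sum.inr (toFin n hn (j + 1)))) / 2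
          ≤ ((k : ℝ) + i - (j + 1 : ℕ)) / (k + 1) := by
      apply avg_le hkpos
      · have := h1
        push_cast
        convert this using 2
        ring
      · have := h3 (j + 1) (by omega) (by omega)
        push_cast at this ⊢
        convert this using 2
        ring
    refine ⟨?_, ?_, ?_, ?_, ?_, ?_⟩
    · rw [hval]; exact hbound
    · intro j' ha hb
      by_cases hc : j' = j + 1
      · subst hc
        rw [hval']; exact hbound
      · have hj'N : j' < n := by omega
        rw [hst, equil_lr_inr _ _ _ _ (toFin_ne hn hj'N hj1N hc)]
        exact h2 j' ha (by omega)
    · intro j' ha hb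
      have hj'N : j' < n := by omega
      rw [hst, equil_lr_inr _ _ _ _ (toFin_ne hn hj'N hj1N (by omega))]
      exact h3 j' (by omega) hb
    · intro i' ha hb
      rw [hst, equil_lr_inl _ _ _ _ (toFin_ne hn hb hiN (by omega))]
      exact h4 i' ha hb
    · intro j' ha hb
      rw [hst, equil_lr_inr _ _ _ _ (toFin_ne hn hb hj1N (by omega))]
      exact h5 j' ha hb
    · intro i' ha
      rw [hst, equil_lr_inl _ _ _ _ (toFin_ne hn (by omega) hiN (by omega))]
      exact h6 i' ha
  -- Transition to the next loop
  have step2 : ∀ i : ℕ, i + 1 + k ≤ n → Q n k hn v i (i + k - 1) →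
      Q n k hn v (i + 1) (i + 1) := by
    intro i hikn ⟨h1, h2, h3, h4, h5, h6⟩
    have hiN : i < n := by omega
    have hi1N : i + 1 < n := by omega
    have hst := st_next (k := k) hn v i hk
    have hval : st n k hn v (i + 1) (i + 1) (Sum.inl (toFin n hn (i + 1)))
        = (st n k hn v i (i + k - 1) (Sum.inl (toFin n hn (i + 1)))
            + st n k hn v i (i + k - 1) (Sum.inr (toFin n hn (i + 1)))) / 2 := by
      rw [hst, equil_fst]
    have hval' : st n k hn v (i + 1) (i + 1) (Sum.inr (toFin n hn (i + 1)))
        = (st n k hn v i (i + k - 1) (Sum.inl (toFin n hn (i + 1)))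
            + st n k hn v i (i + k - 1) (Sum.inr (toFin n hn (i + 1)))) / 2 := by
      rw [hst, equil_snd]
    have hredval : st n k hn v i (i + k - 1) (Sum.inl (toFin n hn (i + 1))) = 1 :=
      h4 (i + 1) (by omega) hi1N
    have hblueval : st n k hn v i (i + k - 1) (Sum.inr (toFin n hn (i + 1)))
        ≤ ((k : ℝ) - 1) / (k + 1) := by
      by_cases hc : i + 1 ≤ i + k - 1
      · have := h2 (i + 1) (by omega) hc
        push_cast at this ⊢
        convert this using 2
        ring
      · have hk1' : k = 1 := by omega
        have := h5 (i + 1) (by omega) hi1N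
        rw [this, hk1']
        norm_num
    have hbound : (st n k hn v i (i + k - 1) (Sum.inl (toFin n hn (i + 1)))
            + st n k hn v i (i + k - 1) (Sum.inr (toFin n hn (i + 1)))) / 2
          ≤ ((k : ℝ) + (i + 1 : ℕ) - (i + 1 : ℕ)) / (k + 1) := by
      have heq : ((k : ℝ) + (i + 1 : ℕ) - (i + 1 : ℕ)) = (k : ℝ) := by push_cast; ring
      rw [heq]
      apply avg_le hkpos
      · rw [hredval, div_self (ne_of_gt hkpos)]
      · exact hblueval
    have hcast : ((i + k - 1 : ℕ) : ℝ) = (i : ℝ) + k - 1 := by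
      rw [Nat.cast_sub (by omega : 1 ≤ i + k)]
      push_cast
      ring
    refine ⟨?_, ?_, ?_, ?_, ?_, ?_⟩
    · rw [hval]; exact hbound
    · intro j' ha hb
      have hc : j' = i + 1 := by omega
      subst hc
      rw [hval']; exact hbound
    · intro j' ha hb
      have hj'N : j' < n := by omega
      rw [hst, equil_lr_inr _ _ _ _ (toFin_ne hn hj'N hi1N (by omega))]
      by_cases hc : j' ≤ i + k - 1
      · have := h2 j' (by omega) hc
        push_cast at this ⊢
        convert this using 2
        ring
      · have hc' : j' = i + k := by omega
        rw [h5 j' (by omega) hj'N]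
        subst hc'
        apply div_nonneg _ (le_of_lt hkpos)
        push_cast
        linarith
    · intro i' ha hb
      rw [hst, equil_lr_inl _ _ _ _ (toFin_ne hn hb hi1N (by omega))]
      exact h4 i' (by omega) hb
    · intro j' ha hb
      rw [hst, equil_lr_inr _ _ _ _ (toFin_ne hn hb hi1N (by omega))]
      exact h5 j' (by omega) hb
    · intro i' ha
      rw [hst, equil_lr_inl _ _ _ _ (toFin_ne hn (by omega) hi1N (by omega))]
      by_cases hc : i' = i
      · subst hc
        have := h1
        rw [hcast] at this
        have heq : (k : ℝ) + i' - ((i' : ℝ) + k - 1) = 1 := by ring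
        rw [heq] at this
        exact this
      · exact h6 i' (by omega)
  -- Inner induction along a loop
  have inner : ∀ i : ℕ, i + k ≤ n → Q n k hn v i i →
      ∀ j : ℕ, i ≤ j → j < i + k → Q n k hn v i j := by
    intro i hik hQ j hij hjk
    obtain ⟨d, rfl⟩ : ∃ d, j = i + d := ⟨j - i, by omega⟩
    clear hij
    induction d with
    | zero => simpa using hQ
    | succ d ih =>
      have hd : i + (d + 1) = (i + d) + 1 := by omega
      rw [hd]
      exact step1 i (i + d) hik (by omega) (by omega) (ih (by omega))
  -- Outer induction over loops
  have diag : ∀ i : ℕ, i + k ≤ n → Q n k hn v i i := by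
    intro i
    induction i with
    | zero => intro _; exact base
    | succ i ih =>
      intro h
      exact step2 i h (inner i (by omega) (ih (by omega)) (i + k - 1) (by omega) (by omega))
  have main : ∀ i j : ℕ, i + k ≤ n → i ≤ j → j < i + k → Q n k hn v i j :=
    fun i j h1 h2 h3 => inner i h1 (diag i h1) j h2 h3
  constructor
  · intro i j h1 h2 h3
    obtain ⟨q1, q2, _, _, _, _⟩ := main i j h1 h2 h3
    exact ⟨q1, q2 j h2 le_rfl⟩
  · intro i hik
    have hQ := main (n - k) (n - 1) (by omega) (by omega) (by omega)
    obtain ⟨q1, _, _, _, _, q6⟩ := hQ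
    by_cases hc : i = n - k
    · subst hc
      have hcast1 : ((n - k : ℕ) : ℝ) = (n : ℝ) - k := by
        rw [Nat.cast_sub hkn]
      have hcast2 : ((n - 1 : ℕ) : ℝ) = (n : ℝ) - 1 := by
        rw [Nat.cast_sub hn]
        norm_num
      have := q1
      unfold st at this
      rw [hcast1, hcast2] at this
      have heq : (k : ℝ) + ((n : ℝ) - k) - ((n : ℝ) - 1) = 1 := by ring
      rw [heq] at this
      exact this
    · have := q6 i (by omega)
      unfold st at this
      exact this
end

section
/- For every natural number n ≥ 1, choosing k = ⌊√(n+2)⌋ gives (n−k+1)/(k+1) + (k−1) < 2√n. -/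
/-- For `n ≥ 1` and `k = ⌊√(n+2)⌋`, one has `(n - k + 1)/(k + 1) + (k - 1) < 2√n`. -/
theorem sqrt_window_bound (n : ℕ) (hn : 1 ≤ n) :
    (((n : ℝ) - (Nat.sqrt (n + 2) : ℝ) + 1) / ((Nat.sqrt (n + 2) : ℝ) + 1)
        + ((Nat.sqrt (n + 2) : ℝ) - 1))
      < 2 * Real.sqrt n := by
  set m : ℕ := Nat.sqrt (n + 2) with hm
  set K : ℝ := (m : ℝ) with hK
  set s : ℝ := Real.sqrt n with hsdef
  have hs0 : 0 ≤ s := Real.sqrt_nonneg _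
  have hs2 : s ^ 2 = (n : ℝ) := Real.sq_sqrt (by positivity)
  have hs1 : 1 ≤ s := by
    rw [hsdef, show (1:ℝ) = Real.sqrt 1 by simp]
    exact Real.sqrt_le_sqrt (by exact_mod_cast hn)
  have hm1 : 1 ≤ m := Nat.le_sqrt.mpr (by omega)
  have hK1 : (1 : ℝ) ≤ K := by rw [hK]; exact_mod_cast hm1
  have hlow' : m ^ 2 ≤ n + 2 := Nat.sqrt_le' _
  have hhigh' : n + 2 < (m + 1) ^ 2 := Nat.lt_succ_sqrt' _
  have hlow : K ^ 2 ≤ (n : ℝ) + 2 := by rw [hK]; exact_mod_cast hlow'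
  have hhigh : (n : ℝ) + 2 < (K + 1) ^ 2 := by rw [hK]; exact_mod_cast hhigh'
  have hKpos : (0 : ℝ) < K + 1 := by linarith
  have key : (s - K) ^ 2 < K + 2 * s := by
    rcases le_or_gt K s with h | h
    · have hsK : s < K + 1 := by nlinarith
      nlinarith
    · have h1 : K - s ≤ 1 := by nlinarith
      nlinarith
  rw [div_add' _ _ _ (ne_of_gt hKpos), div_lt_iff₀ hKpos]
  nlinarith [key, hs2]
end

section
/- For n full tanks and n empty tanks, there exists a finite sequence of pairwise equilibrations after which every originally full tank contains less than 2/√n units of water (equivalently, every originally empty tank contains more than 1 − 2/√n units), provided one also allows the operation of simultaneously averaging the contents of all red tanks and of all blue tanks. -/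
/-- Equilibrate all tanks in the set `S`: each tank in `S` gets the average of the
contents of `S`; the others are unchanged. A pairwise equilibration is the case `S.card = 2`. -/
noncomputable def groupEquil {α : Type*} [DecidableEq α] (S : Finset α) (v : α → ℝ) : α → ℝ :=
  fun a => if a ∈ S then (∑ b ∈ S, v b) / S.card else v a

/-!
Red tank `i` is equilibrated in turn with blue tanks `i, i + 1, …, i + k - 1` (for
`i ≤ n - k`). Put `c = 1 / (k + 1)`. Just before red tank `p` starts, the blue tank `d` places
ahead of it holds at most `1 - (d + 2) c`, the level at which red tank `p - 1` left it. So each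
meeting takes at least `c` from the red tank, which ends its sweep with at most `1 - k c = c`,
and the red tanks hold at most `n - (n - k + 1) k c` in total. For `k = ⌊√(n + 2)⌋` this is less
than `2 √n`; averaging all red and all blue tanks then gives the required bounds, because water
is conserved.
-/

open Finset

section Equilibrate

variable {α : Type*} [DecidableEq α]

theorem groupEquil_apply_of_mem {S : Finset α} {a : α} (v : α → ℝ) (ha : a ∈ S) :
    groupEquil S v a = (∑ b ∈ S, v b) / #S :=
  if_pos ha

theorem groupEquil_apply_of_notMem {S : Finset α} {a : α} (v : α → ℝ) (ha : a ∉ S) :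
    groupEquil S v a = v a :=
  if_neg ha

theorem groupEquil_pair_apply_of_mem {a b x : α} (hab : a ≠ b) (hx : x ∈ ({a, b} : Finset α))
    (v : α → ℝ) : groupEquil {a, b} v x = (v a + v b) / 2 := by
  rw [groupEquil_apply_of_mem v hx, sum_pair hab, card_pair hab, Nat.cast_ofNat]

theorem sum_groupEquil [Fintype α] (S : Finset α) (v : α → ℝ) :
    ∑ a, groupEquil S v a = ∑ a, v a := by
  rw [← sum_add_sum_compl S (groupEquil S v), ← sum_add_sum_compl S v,
    sum_congr rfl fun a ha => groupEquil_apply_of_notMem v (mem_compl.1 ha),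
    sum_congr rfl fun a ha => groupEquil_apply_of_mem v ha, sum_const, nsmul_eq_mul]
  rcases S.eq_empty_or_nonempty with rfl | hS
  · simp
  · rw [mul_div_cancel₀ _ (Nat.cast_ne_zero.2 hS.card_pos.ne')]

noncomputable def equilibrate (L : List (Finset α)) (v : α → ℝ) : α → ℝ :=
  L.foldl (fun w S => groupEquil S w) v

@[simp]
theorem equilibrate_nil (v : α → ℝ) : equilibrate [] v = v :=
  rfl

@[simp]
theorem equilibrate_cons (S : Finset α) (L : List (Finset α)) (v : α → ℝ) :
    equilibrate (S :: L) v = equilibrate L (groupEquil S v) :=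
  rfl

theorem equilibrate_append (L₁ L₂ : List (Finset α)) (v : α → ℝ) :
    equilibrate (L₁ ++ L₂) v = equilibrate L₂ (equilibrate L₁ v) :=
  List.foldl_append

theorem equilibrate_apply_of_forall_notMem {L : List (Finset α)} {a : α} (h : ∀ S ∈ L, a ∉ S)
    (v : α → ℝ) : equilibrate L v a = v a := by
  induction L generalizing v with
  | nil => rfl
  | cons S L ih =>
    rw [equilibrate_cons, ih (fun T hT => h T (List.mem_cons_of_mem S hT)),
      groupEquil_apply_of_notMem v (h S List.mem_cons_self)]

theorem sum_equilibrate [Fintype α] (L : List (Finset α)) (v : α → ℝ) :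
    ∑ a, equilibrate L v a = ∑ a, v a := by
  induction L generalizing v with
  | nil => rfl
  | cons S L ih => rw [equilibrate_cons, ih, sum_groupEquil]

def sweep (r : α) (b : ℕ → α) (m : ℕ) : List (Finset α) :=
  (List.range m).map fun s => {r, b s}

theorem sweep_succ (r : α) (b : ℕ → α) (m : ℕ) :
    sweep r b (m + 1) = sweep r b m ++ [{r, b m}] := by
  simp [sweep, List.range_succ]

theorem equilibrate_sweep_apply_of_ne {r a : α} {b : ℕ → α} {m : ℕ} (har : a ≠ r)
    (hab : ∀ s < m, b s ≠ a) (v : α → ℝ) : equilibrate (sweep r b m) v a = v a := by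
  refine equilibrate_apply_of_forall_notMem ?_ v
  simp only [sweep, List.mem_map, List.mem_range]
  rintro _ ⟨s, hs, rfl⟩
  simpa [har] using (hab s hs).symm

theorem equilibrate_sweep_le {r : α} {b : ℕ → α} {m : ℕ} (hbr : ∀ s < m, b s ≠ r)
    (hb : Set.InjOn b (Set.Iio m)) {v : α → ℝ} {x c : ℝ} (hr : v r ≤ x)
    (hbv : ∀ s < m, v (b s) ≤ x - (s + 2) * c) :
    equilibrate (sweep r b m) v r ≤ x - m * c ∧
      ∀ s < m, equilibrate (sweep r b m) v (b s) ≤ x - (s + 1) * c := by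
  induction m with
  | zero => simpa [sweep] using hr
  | succ m ih =>
    obtain ⟨ihr, ihb⟩ := ih (fun s hs => hbr s (by omega))
      (hb.mono (Set.Iio_subset_Iio (by omega))) (fun s hs => hbv s (by omega))
    set w := equilibrate (sweep r b m) v
    have hbm_ne : ∀ s < m, b s ≠ b m := fun s hs h => by
      have := hb (Set.mem_Iio.2 (by omega)) (Set.mem_Iio.2 (Nat.lt_succ_self m)) h
      omega
    have hbm : w (b m) = v (b m) :=
      equilibrate_sweep_apply_of_ne (hbr m (by omega)) hbm_ne v
    have hmeet : (w r + w (b m)) / 2 ≤ x - ((m + 1 : ℕ) : ℝ) * c := by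
      push_cast
      linarith [hbv m (by omega)]
    have hrb : r ≠ b m := (hbr m (by omega)).symm
    rw [sweep_succ, equilibrate_append, equilibrate_cons, equilibrate_nil]
    refine ⟨by rwa [groupEquil_pair_apply_of_mem hrb (by simp)], fun s hs => ?_⟩
    rcases Nat.lt_succ_iff_lt_or_eq.1 hs with hs | rfl
    · rw [groupEquil_apply_of_notMem _ (by simp [hbr s (by omega), hbm_ne s hs])]
      exact ihb s hs
    · rw [groupEquil_pair_apply_of_mem hrb (by simp)]
      exact hmeet.trans_eq (by push_cast; ring)

def movingWindow (red blue : ℕ → α) (k p : ℕ) : List (Finset α) :=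
  (List.range p).flatMap fun i => sweep (red i) (fun s => blue (i + s)) k

theorem movingWindow_succ (red blue : ℕ → α) (k p : ℕ) :
    movingWindow red blue k (p + 1) =
      movingWindow red blue k p ++ sweep (red p) (fun s => blue (p + s)) k := by
  simp [movingWindow, List.range_succ]

theorem card_of_mem_movingWindow {red blue : ℕ → α} (hdisj : ∀ i j, red i ≠ blue j) {k p : ℕ}
    {S : Finset α} (hS : S ∈ movingWindow red blue k p) : #S = 2 := by
  simp only [movingWindow, sweep, List.mem_flatMap, List.mem_map] at hS
  obtain ⟨i, -, s, -, rfl⟩ := hS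
  exact card_pair (hdisj _ _)

end Equilibrate

/-- Bounds on the contents just before red tank `p` sweeps. -/
structure MovingWindowBounds {α : Type*} (red blue : ℕ → α) (N k : ℕ) (c : ℝ) (p : ℕ)
    (w : α → ℝ) : Prop where
  swept : ∀ i < p, w (red i) ≤ 1 - k * c
  waiting : ∀ i, p ≤ i → i < N → w (red i) ≤ 1
  blue_le : ∀ j, p ≤ j → j < N → w (blue j) ≤ 1 - (min (j - p + 2) (k + 1) : ℕ) * c

namespace MovingWindowBounds

variable {α : Type*} {red blue : ℕ → α} {N k : ℕ} {c : ℝ}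

theorem zero (hc : 0 ≤ c) (hkc : (k + 1) * c ≤ 1) {v : α → ℝ}
    (hv_red : ∀ i < N, v (red i) ≤ 1) (hv_blue : ∀ j < N, v (blue j) ≤ 0) :
    MovingWindowBounds red blue N k c 0 v := by
  refine ⟨by simp, fun i _ hi => hv_red i hi, fun j _ hj => (hv_blue j hj).trans ?_⟩
  have : ((min (j - 0 + 2) (k + 1) : ℕ) : ℝ) ≤ k + 1 := by exact_mod_cast min_le_right _ _
  linarith [mul_le_mul_of_nonneg_right this hc]

theorem equilibrate_sweep [DecidableEq α] (hred : Set.InjOn red (Set.Iio N))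
    (hblue : Set.InjOn blue (Set.Iio N)) (hdisj : ∀ i j, red i ≠ blue j) {p : ℕ} (hp : p < N)
    (hpk : p + k ≤ N) {w : α → ℝ} (hw : MovingWindowBounds red blue N k c p w) :
    MovingWindowBounds red blue N k c (p + 1)
      (equilibrate (_root_.sweep (red p) (fun s => blue (p + s)) k) w) := by
  have hwindow_inj : Set.InjOn (fun s => blue (p + s)) (Set.Iio k) := fun s hs t ht h => by
    have := hblue (Set.mem_Iio.2 (by rw [Set.mem_Iio] at hs; omega))
      (Set.mem_Iio.2 (by rw [Set.mem_Iio] at ht; omega)) h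
    omega
  have hfresh : ∀ s < k, w (blue (p + s)) ≤ 1 - (s + 2) * c := fun s hs => by
    have h := hw.blue_le (p + s) (by omega) (by omega)
    rwa [show min (p + s - p + 2) (k + 1) = s + 2 by omega, Nat.cast_add, Nat.cast_two] at h
  obtain ⟨hswept_red, hswept_blue⟩ := equilibrate_sweep_le (fun s _ => (hdisj p (p + s)).symm)
    hwindow_inj (hw.waiting p le_rfl hp) hfresh
  have hred_ne : ∀ i < N, i ≠ p → red i ≠ red p := fun i hi hip h =>
    hip (hred hi (Set.mem_Iio.2 hp) h)
  refine ⟨fun i hi => ?_, fun i hi hiN => ?_, fun j hj hjN => ?_⟩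
  · rcases Nat.lt_succ_iff_lt_or_eq.1 hi with hi | rfl
    · rw [equilibrate_sweep_apply_of_ne (hred_ne i (by omega) (by omega))
        fun s _ => (hdisj i _).symm]
      exact hw.swept i hi
    · exact hswept_red
  · rw [equilibrate_sweep_apply_of_ne (hred_ne i hiN (by omega)) fun s _ => (hdisj i _).symm]
    exact hw.waiting i (by omega) hiN
  · by_cases hjw : j < p + k
    · have h := hswept_blue (j - p) (by omega)
      rw [Nat.add_sub_cancel' (by omega)] at h
      rw [show min (j - (p + 1) + 2) (k + 1) = j - p + 1 by omega]
      exact h.trans_eq (by push_cast; ring)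
    · rw [equilibrate_sweep_apply_of_ne (hdisj p j).symm fun s hs h => by
        have := hblue (Set.mem_Iio.2 (by omega)) (Set.mem_Iio.2 hjN) h
        omega]
      refine (hw.blue_le j (by omega) hjN).trans_eq ?_
      rw [show min (j - p + 2) (k + 1) = min (j - (p + 1) + 2) (k + 1) by omega]

end MovingWindowBounds

theorem movingWindowBounds_equilibrate_movingWindow {α : Type*} [DecidableEq α]
    {red blue : ℕ → α} {N k : ℕ} (hred : Set.InjOn red (Set.Iio N))
    (hblue : Set.InjOn blue (Set.Iio N)) (hdisj : ∀ i j, red i ≠ blue j) (hk : 0 < k) {c : ℝ}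
    (hc : 0 ≤ c) (hkc : (k + 1) * c ≤ 1) {v : α → ℝ} (hv_red : ∀ i < N, v (red i) ≤ 1)
    (hv_blue : ∀ j < N, v (blue j) ≤ 0) {p : ℕ} (hpk : p + k ≤ N + 1) :
    MovingWindowBounds red blue N k c p (equilibrate (movingWindow red blue k p) v) := by
  induction p with
  | zero => exact .zero hc hkc hv_red hv_blue
  | succ p ih =>
    rw [movingWindow_succ, equilibrate_append]
    exact (ih (by omega)).equilibrate_sweep hred hblue hdisj (by omega) (by omega)

theorem sum_equilibrate_movingWindow_red_le {α : Type*} [DecidableEq α] {red blue : ℕ → α}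
    {N k p : ℕ} (hred : Set.InjOn red (Set.Iio N)) (hblue : Set.InjOn blue (Set.Iio N))
    (hdisj : ∀ i j, red i ≠ blue j) (hk : 0 < k) (hpk : p + k ≤ N + 1) {v : α → ℝ}
    (hv_red : ∀ i < N, v (red i) ≤ 1) (hv_blue : ∀ j < N, v (blue j) ≤ 0) :
    ∑ i ∈ range N, equilibrate (movingWindow red blue k p) v (red i) ≤ N - p * (k / (k + 1)) := by
  have hc : (0 : ℝ) ≤ 1 / (k + 1) := by positivity
  have hkc : ((k : ℝ) + 1) * (1 / (k + 1)) ≤ 1 := by rw [mul_one_div_cancel (by positivity)]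
  obtain ⟨hdone, hwaiting, -⟩ :=
    movingWindowBounds_equilibrate_movingWindow hred hblue hdisj hk hc hkc hv_red hv_blue hpk
  have hpN : p ≤ N := by omega
  rw [← sum_range_add_sum_Ico _ hpN]
  have hsum_done := sum_le_card_nsmul _ _ _ fun i hi => hdone i (mem_range.1 hi)
  have hsum_waiting := sum_le_card_nsmul _ _ _ fun i hi =>
    hwaiting i (mem_Ico.1 hi).1 (mem_Ico.1 hi).2
  rw [card_range, nsmul_eq_mul] at hsum_done
  rw [Nat.card_Ico, nsmul_eq_mul, Nat.cast_sub hpN, mul_one] at hsum_waiting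
  have : (1 : ℝ) - k * (1 / (k + 1)) = 1 - k / (k + 1) := by ring
  nlinarith

theorem sub_mul_div_lt_two_sqrt {n k : ℝ} (hn : 1 ≤ n) (hk : k ≤ √(n + 2))
    (hk' : √(n + 2) < k + 1) : n - (n + 1 - k) * (k / (k + 1)) < 2 * √n := by
  set s := √(n + 2) with hs
  have hs_sq : s ^ 2 = n + 2 := Real.sq_sqrt (by linarith)
  have hsqrt_n : 1 ≤ √n := Real.one_le_sqrt.2 hn
  have hsqrt_n_sq : √n ^ 2 = n := Real.sq_sqrt (by linarith)
  have hs_le : s ≤ √n + 1 := by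
    rw [hs, Real.sqrt_le_left (by positivity)]
    nlinarith
  have hk0 : 0 < k + 1 := by linarith [Real.sqrt_nonneg (n + 2)]
  -- `0 ≤ s - k < 1` gives `(s - k) ^ 2 ≤ s - k`, which closes the final inequality.
  have hsk : 0 ≤ (s - k) * (k + 1 - s) := mul_nonneg (by linarith) (by linarith)
  have hsqrt_n_mul : (s - 1) * (k + 1) ≤ √n * (k + 1) :=
    mul_le_mul_of_nonneg_right (by linarith) hk0.le
  have hpos : 0 < s := Real.sqrt_pos.2 (by linarith)
  rw [show n - (n + 1 - k) * (k / (k + 1)) = (n + k ^ 2 - k) / (k + 1) by field_simp; ring,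
    div_lt_iff₀ hk0]
  nlinarith

section Sides

variable {ι κ : Type*} [Fintype ι] [Fintype κ] [DecidableEq ι] [DecidableEq κ]

theorem equilibrate_sides_apply_inl (w : ι ⊕ κ → ℝ) (i : ι) :
    equilibrate [univ.image Sum.inl, univ.image Sum.inr] w (Sum.inl i) =
      (∑ i, w (Sum.inl i)) / Fintype.card ι := by
  rw [equilibrate_cons, equilibrate_cons, equilibrate_nil, groupEquil_apply_of_notMem _ (by simp),
    groupEquil_apply_of_mem _ (by simp), sum_image Sum.inl_injective.injOn,
    card_image_of_injective _ Sum.inl_injective, card_univ]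

theorem equilibrate_sides_apply_inr (w : ι ⊕ κ → ℝ) (j : κ) :
    equilibrate [univ.image Sum.inl, univ.image Sum.inr] w (Sum.inr j) =
      (∑ j, w (Sum.inr j)) / Fintype.card κ := by
  rw [equilibrate_cons, equilibrate_cons, equilibrate_nil, groupEquil_apply_of_mem _ (by simp),
    sum_image Sum.inr_injective.injOn, card_image_of_injective _ Sum.inr_injective, card_univ]
  simp only [groupEquil_apply_of_notMem _ (by simp : Sum.inr _ ∉ univ.image Sum.inl)]

end Sides

theorem Fin.ofNat_injOn (n : ℕ) [NeZero n] : Set.InjOn (Fin.ofNat n) (Set.Iio n) :=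
  fun i hi j hj h => by
    simpa [Fin.ext_iff, Nat.mod_eq_of_lt hi, Nat.mod_eq_of_lt (Set.mem_Iio.1 hj)] using h

def redBlueWindow (n : ℕ) [NeZero n] : List (Finset (Fin n ⊕ Fin n)) :=
  movingWindow (Sum.inl ∘ Fin.ofNat n) (Sum.inr ∘ Fin.ofNat n) (Nat.sqrt (n + 2))
    (n + 1 - Nat.sqrt (n + 2))

theorem sum_equilibrate_redBlueWindow_inl_lt (n : ℕ) [NeZero n] {v : Fin n ⊕ Fin n → ℝ}
    (hred : ∀ i, v (Sum.inl i) ≤ 1) (hblue : ∀ j, v (Sum.inr j) ≤ 0) :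
    ∑ i, equilibrate (redBlueWindow n) v (Sum.inl i) < 2 * √n := by
  set k := Nat.sqrt (n + 2)
  have hn := NeZero.pos n
  have hk : 0 < k := Nat.sqrt_pos.2 (by omega)
  have hkn : k ≤ n := by nlinarith [Nat.sqrt_le' (n + 2)]
  have hk_le : (k : ℝ) ≤ √(n + 2) := by exact_mod_cast Real.nat_sqrt_le_real_sqrt
  have hk_lt : √(n + 2) < k + 1 := by exact_mod_cast Real.real_sqrt_lt_nat_sqrt_succ
  calc ∑ i, equilibrate (redBlueWindow n) v (Sum.inl i)
      = ∑ i ∈ range n, equilibrate (redBlueWindow n) v (Sum.inl (Fin.ofNat n i)) := by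
        rw [← Fin.sum_univ_eq_sum_range]; simp only [Fin.ofNat_val_eq_self]
    _ ≤ n - (n + 1 - k : ℕ) * (k / (k + 1)) :=
      sum_equilibrate_movingWindow_red_le (Sum.inl_injective.comp_injOn (Fin.ofNat_injOn n))
        (Sum.inr_injective.comp_injOn (Fin.ofNat_injOn n)) (fun _ _ => Sum.inl_ne_inr) hk
        (by omega) (fun i _ => hred _) (fun j _ => hblue _)
    _ < 2 * √n := by
      rw [Nat.cast_sub (by omega), Nat.cast_add_one]
      exact sub_mul_div_lt_two_sqrt (by exact_mod_cast hn) hk_le hk_lt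

theorem div_lt_two_div_sqrt {n x : ℝ} (hn : 0 < n) (hx : x < 2 * √n) : x / n < 2 / √n := by
  rwa [show 2 / √n = 2 * √n / n by rw [mul_div_assoc, Real.sqrt_div_self', mul_one_div],
    div_lt_div_iff_of_pos_right hn]

/-- For `n` full (red) tanks and `n` empty (blue) tanks, there is a finite sequence of moves,
each of which is either a pairwise equilibration, an equilibration of all red tanks, or an
equilibration of all blue tanks, after which every red tank contains less than `2/√n` units and
every blue tank more than `1 - 2/√n` units of water. -/
theorem water_tank_transfer (n : ℕ) (hn : 0 < n) (v : Fin n ⊕ Fin n → ℝ)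
    (hred : ∀ i, v (Sum.inl i) = 1) (hblue : ∀ j, v (Sum.inr j) = 0) :
    ∃ L : List (Finset (Fin n ⊕ Fin n)),
      (∀ S ∈ L, S.card = 2 ∨ S = Finset.univ.image Sum.inl ∨ S = Finset.univ.image Sum.inr) ∧
      (∀ i : Fin n, (L.foldl (fun w S => groupEquil S w) v) (Sum.inl i) < 2 / Real.sqrt n) ∧
      (∀ j : Fin n, (L.foldl (fun w S => groupEquil S w) v) (Sum.inr j)
          > 1 - 2 / Real.sqrt n) := by
  have : NeZero n := ⟨hn.ne'⟩
  set w := equilibrate (redBlueWindow n) v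
  have hred_avg : (∑ i, w (Sum.inl i)) / n < 2 / √n := div_lt_two_div_sqrt
    (by exact_mod_cast hn) (sum_equilibrate_redBlueWindow_inl_lt n (fun i => (hred i).le)
      (fun j => (hblue j).le))
  have htotal : ∑ i, w (Sum.inl i) + ∑ j, w (Sum.inr j) = n := by
    rw [← Fintype.sum_sum_type, sum_equilibrate, Fintype.sum_sum_type]
    simp [hred, hblue]
  refine ⟨redBlueWindow n ++ [univ.image Sum.inl, univ.image Sum.inr], ?_, fun i => ?_,
    fun j => ?_⟩
  · simp only [List.mem_append, List.mem_cons, List.not_mem_nil, or_false]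
    rintro S (hS | hS | hS)
    exacts [Or.inl (card_of_mem_movingWindow (fun _ _ => Sum.inl_ne_inr) hS), Or.inr (Or.inl hS),
      Or.inr (Or.inr hS)]
  · change equilibrate (_ ++ _) v _ < _
    rwa [equilibrate_append, equilibrate_sides_apply_inl, Fintype.card_fin]
  · change equilibrate (_ ++ _) v _ > _
    rw [equilibrate_append, equilibrate_sides_apply_inr, Fintype.card_fin,
      eq_sub_of_add_eq' htotal, sub_div, div_self (NeZero.ne _)]
    linarith
end
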